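/- arXiv:1812.04146 — 6 statements merged into one kernel-verified Lean document; each statement's English description precedes it below -/
import Mathlib

section
/- For any l ≥ 2 and any u in H^l_0(0,L), the first derivative satisfies the interpolation inequality ‖Du‖_{L^2} ≤ ‖D^l u‖_{L^2}^{1/l} · ‖u‖_{L^2}^{1 - 1/l}. -/
/-!
Integrating by parts with vanishing boundary values gives
`∫ (D^{i+1} u)² = -∫ D^i u · D^{i+2} u`, so by Cauchy–Schwarz the sequence
`I i = ‖D^i u‖²` satisfies `I (i+1)² ≤ I i · I (i+2)` for `i + 2 ≤ l`. For such a
log-convex sequence the ratios `I (k+1) / I k` increase, whence `I 1 ^ l ≤ I 0 ^ (l-1) · I l`;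
taking `2l`-th roots gives the inequality.
-/

open MeasureTheory Set

def LogConvexUpTo (l : ℕ) (a : ℕ → ℝ) : Prop :=
  ∀ i, i + 2 ≤ l → a (i + 1) ^ 2 ≤ a i * a (i + 2)

namespace LogConvexUpTo

variable {l : ℕ} {a : ℕ → ℝ}

theorem one_mul_le_zero_mul (ha : LogConvexUpTo l a) (hpos : ∀ i, 0 ≤ a i) :
    ∀ k, k + 2 ≤ l → a 1 * a (k + 1) ≤ a 0 * a (k + 2) := by
  intro k
  induction k with
  | zero => intro hk; nlinarith [ha 0 hk, hpos 1]
  | succ n ih =>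
    intro hk
    rcases (hpos (n + 2)).eq_or_lt with hzero | hpos'
    · rw [show n + 1 + 1 = n + 2 from rfl, ← hzero, mul_zero]
      exact mul_nonneg (hpos 0) (hpos _)
    · refine le_of_mul_le_mul_right ?_ hpos'
      nlinarith [mul_le_mul_of_nonneg_left (ha (n + 1) hk) (hpos 1),
        mul_le_mul_of_nonneg_right (ih (by omega)) (hpos (n + 3))]

theorem one_pow_le (ha : LogConvexUpTo l a) (hpos : ∀ i, 0 ≤ a i) :
    ∀ k, k + 1 ≤ l → a 1 ^ (k + 1) ≤ a 0 ^ k * a (k + 1) := by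
  intro k
  induction k with
  | zero => intro _; simp
  | succ n ih =>
    intro hk
    calc a 1 ^ (n + 1 + 1) = a 1 ^ (n + 1) * a 1 := by ring
      _ ≤ (a 0 ^ n * a (n + 1)) * a 1 := mul_le_mul_of_nonneg_right (ih (by omega)) (hpos 1)
      _ = a 0 ^ n * (a 1 * a (n + 1)) := by ring
      _ ≤ a 0 ^ n * (a 0 * a (n + 2)) :=
          mul_le_mul_of_nonneg_left (ha.one_mul_le_zero_mul hpos n hk) (pow_nonneg (hpos 0) n)
      _ = a 0 ^ (n + 1) * a (n + 1 + 1) := by ring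

end LogConvexUpTo

theorem sq_integral_mul_le_integral_sq_mul_integral_sq {α : Type*} [MeasurableSpace α]
    {μ : Measure α} {f g : α → ℝ} (hf : MemLp f 2 μ) (hg : MemLp g 2 μ) :
    (∫ x, f x * g x ∂μ) ^ 2 ≤ (∫ x, f x ^ 2 ∂μ) * ∫ x, g x ^ 2 ∂μ := by
  have hnorm_rpow : ∀ y : ℝ, ‖y‖ ^ (2:ℝ) = y ^ 2 := fun y => by
    rw [Real.rpow_two, Real.norm_eq_abs, sq_abs]
  have holder := integral_mul_norm_le_Lp_mul_Lq (μ := μ) Real.HolderConjugate.two_two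
    (by simpa using hf) (by simpa using hg)
  simp_rw [hnorm_rpow, ← Real.sqrt_eq_rpow] at holder
  have habs : |∫ x, f x * g x ∂μ| ≤ √(∫ x, f x ^ 2 ∂μ) * √(∫ x, g x ^ 2 ∂μ) :=
    calc |∫ x, f x * g x ∂μ| ≤ ∫ x, ‖f x * g x‖ ∂μ := abs_integral_le_integral_abs
      _ = ∫ x, ‖f x‖ * ‖g x‖ ∂μ := by simp_rw [norm_mul]
      _ ≤ _ := holder
  calc (∫ x, f x * g x ∂μ) ^ 2 = |∫ x, f x * g x ∂μ| ^ 2 := (sq_abs _).symm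
    _ ≤ (√(∫ x, f x ^ 2 ∂μ) * √(∫ x, g x ^ 2 ∂μ)) ^ 2 := by gcongr
    _ = (∫ x, f x ^ 2 ∂μ) * ∫ x, g x ^ 2 ∂μ := by
      rw [mul_pow, Real.sq_sqrt (integral_nonneg fun _ => sq_nonneg _),
        Real.sq_sqrt (integral_nonneg fun _ => sq_nonneg _)]

theorem intervalIntegral_deriv_sq_sq_le {f f' f'' : ℝ → ℝ} {a b : ℝ} (hab : a ≤ b)
    (hf : ∀ x ∈ Icc a b, HasDerivAt f (f' x) x) (hf' : ∀ x ∈ Icc a b, HasDerivAt f' (f'' x) x)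
    (ha : f a = 0) (hb : f b = 0)
    (hf_sq : IntervalIntegrable (fun x => f x ^ 2) volume a b)
    (hf''_sq : IntervalIntegrable (fun x => f'' x ^ 2) volume a b) :
    (∫ x in a..b, f' x ^ 2) ^ 2 ≤ (∫ x in a..b, f x ^ 2) * ∫ x in a..b, f'' x ^ 2 := by
  rw [intervalIntegrable_iff_integrableOn_Ioc_of_le hab] at hf_sq hf''_sq
  have hf_meas : AEStronglyMeasurable f (volume.restrict (Ioc a b)) :=
    (HasDerivAt.continuousOn hf).mono Ioc_subset_Icc_self |>.aestronglyMeasurable measurableSet_Ioc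
  -- `f''` is only known pointwise as a derivative, which makes it a.e. equal to `deriv f'`.
  have hf''_meas : AEStronglyMeasurable f'' (volume.restrict (Ioc a b)) := by
    refine (measurable_deriv f').aestronglyMeasurable.restrict.congr ?_
    filter_upwards [ae_restrict_mem measurableSet_Ioc] with x hx
    exact (hf' x (Ioc_subset_Icc_self hx)).deriv
  have hf_L2 := (memLp_two_iff_integrable_sq hf_meas).2 hf_sq
  have hf''_L2 := (memLp_two_iff_integrable_sq hf''_meas).2 hf''_sq
  have hf'_int : IntervalIntegrable f' volume a b :=
    ((HasDerivAt.continuousOn hf').mono (uIcc_of_le hab).subset).intervalIntegrable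
  have hf''_int : IntervalIntegrable f'' volume a b :=
    (intervalIntegrable_iff_integrableOn_Ioc_of_le hab).2 (hf''_L2.integrable one_le_two)
  have hparts : ∫ x in a..b, f x * f'' x = -∫ x in a..b, f' x ^ 2 := by
    rw [intervalIntegral.integral_mul_deriv_eq_deriv_mul (by rwa [uIcc_of_le hab])
      (by rwa [uIcc_of_le hab]) hf'_int hf''_int, ha, hb]
    simp [sq]
  simp only [intervalIntegral.integral_of_le hab] at hparts ⊢
  calc (∫ x in Ioc a b, f' x ^ 2) ^ 2 = (∫ x in Ioc a b, f x * f'' x) ^ 2 := by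
        rw [hparts, neg_sq]
    _ ≤ _ := sq_integral_mul_le_integral_sq_mul_integral_sq hf_L2 hf''_L2

theorem rpow_half_le_of_pow_le_pow_pred_mul {x y z : ℝ} {l : ℕ} (hl : 0 < l)
    (hx : 0 ≤ x) (hy : 0 ≤ y) (hz : 0 ≤ z) (h : x ^ l ≤ y ^ (l - 1) * z) :
    x ^ ((1:ℝ) / 2) ≤ z ^ (1 / (2 * (l:ℝ))) * y ^ ((1 - 1 / (l:ℝ)) / 2) := by
  have hl' : (0:ℝ) < l := by exact_mod_cast hl
  calc x ^ ((1:ℝ) / 2) = (x ^ l) ^ (1 / (2 * (l:ℝ))) := by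
        rw [← Real.rpow_natCast, ← Real.rpow_mul hx]; congr 1; field_simp
    _ ≤ (y ^ (l - 1) * z) ^ (1 / (2 * (l:ℝ))) := by gcongr
    _ = z ^ (1 / (2 * (l:ℝ))) * y ^ ((1 - 1 / (l:ℝ)) / 2) := by
        rw [Real.mul_rpow (by positivity) hz, mul_comm, ← Real.rpow_natCast,
          ← Real.rpow_mul hy, Nat.cast_sub hl, Nat.cast_one]
        congr 2; field_simp

/-- For `l ≥ 2` and `u ∈ H^l₀(0,L)`:
`‖Du‖ ≤ ‖D^l u‖^{1/l} ‖u‖^{1-1/l}`.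
Here `D i` denotes the `i`-th derivative of `u = D 0`. -/
theorem stmt_2 (L : ℝ) (hL : 0 < L) (l : ℕ) (hl : 2 ≤ l) (D : ℕ → ℝ → ℝ)
    (hderiv : ∀ i < l, ∀ x ∈ Set.Icc (0:ℝ) L, HasDerivAt (D i) (D (i+1) x) x)
    (hint : ∀ i ≤ l, IntervalIntegrable (fun x => (D i x)^2) MeasureTheory.volume 0 L)
    (hbc : ∀ i < l, D i 0 = 0 ∧ D i L = 0) :
    (∫ x in (0:ℝ)..L, (D 1 x)^2) ^ ((1:ℝ)/2)
      ≤ (∫ x in (0:ℝ)..L, (D l x)^2) ^ (1/(2*(l:ℝ)))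
        * (∫ x in (0:ℝ)..L, (D 0 x)^2) ^ ((1 - 1/(l:ℝ))/2) := by
  set I : ℕ → ℝ := fun i => ∫ x in (0:ℝ)..L, D i x ^ 2
  have hI_nonneg : ∀ i, 0 ≤ I i := fun i =>
    intervalIntegral.integral_nonneg hL.le fun _ _ => sq_nonneg _
  have hI : LogConvexUpTo l I := fun i hi =>
    intervalIntegral_deriv_sq_sq_le hL.le (hderiv i (by omega)) (hderiv (i + 1) (by omega))
      (hbc i (by omega)).1 (hbc i (by omega)).2 (hint i (by omega)) (hint (i + 2) hi)
  have hpow := hI.one_pow_le hI_nonneg (l - 1) (by omega)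
  rw [Nat.sub_add_cancel (by omega)] at hpow
  exact rpow_half_le_of_pow_le_pow_pred_mul (by omega) (hI_nonneg 1) (hI_nonneg 0) (hI_nonneg l) hpow
end

section
/- For any l ≥ 1 and any u in H^l_0(0,L), the sup norm satisfies ‖u‖_∞ ≤ √2 · ‖D^l u‖_{L^2}^{1/(2l)} · ‖u‖_{L^2}^{1 − 1/(2l)}. -/
/-!
Write `‖·‖` for the `L²(0, L)` norm. Integrating by parts, with the boundary terms killed by the
vanishing of `D^{i-1} u`, gives `‖D^i u‖² = -∫ D^{i-1} u · D^{i+1} u ≤ ‖D^{i-1} u‖ ‖D^{i+1} u‖` for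
`0 < i < l`, so the sequence `‖D^i u‖` is log-convex and hence `‖D u‖^l ≤ ‖u‖^{l-1} ‖D^l u‖`.
On the other hand `u(x)² = ∫₀ˣ 2 u u' ≤ 2 ‖u‖ ‖D u‖`. Raising this to the power `l` and inserting
the first bound gives `u(x)^{2l} ≤ 2^l ‖u‖^{2l-1} ‖D^l u‖`.
-/

open MeasureTheory Set intervalIntegral

noncomputable def intervalL2Norm (a b : ℝ) (f : ℝ → ℝ) : ℝ :=
  √(∫ x in a..b, f x ^ 2)

theorem integral_abs_mul_le_sqrt_mul_sqrt {α : Type*} [MeasurableSpace α] {μ : Measure α}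
    {f g : α → ℝ} (hf : MemLp f 2 μ) (hg : MemLp g 2 μ) :
    ∫ x, |f x * g x| ∂μ ≤ √(∫ x, f x ^ 2 ∂μ) * √(∫ x, g x ^ 2 ∂μ) := by
  have h := integral_mul_norm_le_Lp_mul_Lq Real.HolderConjugate.two_two
    (by simpa using hf) (by simpa using hg)
  simpa [abs_mul, Real.sqrt_eq_rpow] using h

theorem aestronglyMeasurable_of_hasDerivAt {F : Type*} [NormedAddCommGroup F] [NormedSpace ℝ F]
    [CompleteSpace F] {f f' : ℝ → F} {a b : ℝ} (h : ∀ x ∈ Ioo a b, HasDerivAt f (f' x) x) :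
    AEStronglyMeasurable f' (volume.restrict (Ioc a b)) := by
  rw [← Measure.restrict_congr_set Ioo_ae_eq_Ioc]
  exact (aestronglyMeasurable_deriv f _).congr
    ((ae_restrict_iff' measurableSet_Ioo).2 (ae_of_all _ fun x hx => (h x hx).deriv))

theorem intervalL2Norm_nonneg (a b : ℝ) (f : ℝ → ℝ) : 0 ≤ intervalL2Norm a b f :=
  Real.sqrt_nonneg _

section

variable {f f' f'' g : ℝ → ℝ} {a b : ℝ}

theorem integral_abs_mul_le_intervalL2Norm_mul (hab : a ≤ b)
    (hf : MemLp f 2 (volume.restrict (Ioc a b))) (hg : MemLp g 2 (volume.restrict (Ioc a b))) :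
    ∫ x in a..b, |f x * g x| ≤ intervalL2Norm a b f * intervalL2Norm a b g := by
  simpa only [intervalL2Norm, integral_of_le hab] using integral_abs_mul_le_sqrt_mul_sqrt hf hg

theorem intervalL2Norm_deriv_sq_le_mul (hab : a ≤ b)
    (hf : ∀ x ∈ Icc a b, HasDerivAt f (f' x) x) (hf' : ∀ x ∈ Icc a b, HasDerivAt f' (f'' x) x)
    (ha : f a = 0) (hb : f b = 0) (hf₂ : MemLp f 2 (volume.restrict (Ioc a b)))
    (hf''₂ : MemLp f'' 2 (volume.restrict (Ioc a b))) :
    intervalL2Norm a b f' ^ 2 ≤ intervalL2Norm a b f * intervalL2Norm a b f'' := by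
  rw [← uIcc_of_le hab] at hf hf'
  have hf'_int : IntervalIntegrable f' volume a b :=
    ContinuousOn.intervalIntegrable fun x hx => (hf' x hx).continuousAt.continuousWithinAt
  have hf''_int : IntervalIntegrable f'' volume a b :=
    (intervalIntegrable_iff_integrableOn_Ioc_of_le hab).2 (hf''₂.integrable one_le_two)
  have parts := integral_mul_deriv_eq_deriv_mul hf hf' hf'_int hf''_int
  rw [ha, hb, zero_mul, zero_mul, sub_zero, zero_sub] at parts
  calc intervalL2Norm a b f' ^ 2 = -∫ x in a..b, f x * f'' x := by
        rw [intervalL2Norm, Real.sq_sqrt (integral_nonneg hab fun x _ => sq_nonneg _)]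
        simp only [parts, neg_neg, sq]
    _ ≤ ∫ x in a..b, |f x * f'' x| := (neg_le_abs _).trans (abs_integral_le_integral_abs hab)
    _ ≤ _ := integral_abs_mul_le_intervalL2Norm_mul hab hf₂ hf''₂

theorem sq_le_two_mul_intervalL2Norm_mul_deriv {x : ℝ} (hx : x ∈ Icc a b)
    (hf : ∀ y ∈ Icc a b, HasDerivAt f (f' y) y) (ha : f a = 0)
    (hf₂ : MemLp f 2 (volume.restrict (Ioc a b))) (hf'₂ : MemLp f' 2 (volume.restrict (Ioc a b))) :
    f x ^ 2 ≤ 2 * (intervalL2Norm a b f * intervalL2Norm a b f') := by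
  have hab : a ≤ b := hx.1.trans hx.2
  have hf'_int : IntervalIntegrable f' volume a x :=
    ((intervalIntegrable_iff_integrableOn_Ioc_of_le hab).2 (hf'₂.integrable one_le_two)).mono_set
      (by rw [uIcc_of_le hab, uIcc_of_le hx.1]; exact Icc_subset_Icc_right hx.2)
  have hf_ax : ∀ y ∈ uIcc a x, HasDerivAt f (f' y) y := fun y hy =>
    hf y (Icc_subset_Icc_right hx.2 (by rwa [uIcc_of_le hx.1] at hy))
  have ftc := integral_deriv_mul_eq_sub hf_ax hf_ax hf'_int hf'_int
  rw [ha, mul_zero, sub_zero] at ftc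
  have hprod : IntervalIntegrable (fun y => |f y * f' y|) volume a b :=
    ((intervalIntegrable_iff_integrableOn_Ioc_of_le hab).2 (hf₂.integrable_mul hf'₂)).abs
  calc f x ^ 2 = ∫ y in a..x, 2 * (f y * f' y) := by
        rw [sq, ← ftc]; congr 1; funext y; ring
    _ ≤ ∫ y in a..x, |2 * (f y * f' y)| :=
        (le_abs_self _).trans (abs_integral_le_integral_abs hx.1)
    _ = 2 * ∫ y in a..x, |f y * f' y| := by
        rw [← intervalIntegral.integral_const_mul]; simp only [abs_mul, abs_two]
    _ ≤ 2 * ∫ y in a..b, |f y * f' y| := by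
        gcongr
        exact integral_mono_interval le_rfl hx.1 hx.2 (ae_of_all _ fun y => abs_nonneg _) hprod
    _ ≤ _ := by gcongr; exact integral_abs_mul_le_intervalL2Norm_mul hab hf₂ hf'₂

end

theorem pow_succ_le_pow_mul_of_sq_le_mul {a : ℕ → ℝ} {n : ℕ} (ha : ∀ i, 0 ≤ a i)
    (h : ∀ i < n, a (i + 1) ^ 2 ≤ a i * a (i + 2)) : a 1 ^ (n + 1) ≤ a 0 ^ n * a (n + 1) := by
  -- the ratios `a (k + 1) / a k` increase, written without division
  have ratio : ∀ k ≤ n, a k * a 1 ≤ a 0 * a (k + 1) := by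
    intro k hk
    induction k with
    | zero => rw [mul_comm]
    | succ k ih =>
      rcases (ha (k + 1)).eq_or_lt with hzero | hpos
      · rw [← hzero, zero_mul]
        exact mul_nonneg (ha 0) (ha (k + 2))
      · refine le_of_mul_le_mul_left ?_ hpos
        calc a (k + 1) * (a (k + 1) * a 1) = a (k + 1) ^ 2 * a 1 := by ring
          _ ≤ a k * a (k + 2) * a 1 := mul_le_mul_of_nonneg_right (h k hk) (ha 1)
          _ = a (k + 2) * (a k * a 1) := by ring
          _ ≤ a (k + 2) * (a 0 * a (k + 1)) :=
              mul_le_mul_of_nonneg_left (ih (by omega)) (ha (k + 2))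
          _ = a (k + 1) * (a 0 * a (k + 1 + 1)) := by ring
  suffices ∀ k ≤ n, a 1 ^ (k + 1) ≤ a 0 ^ k * a (k + 1) from this n le_rfl
  intro k hk
  induction k with
  | zero => simp
  | succ k ih =>
    calc a 1 ^ (k + 2) = a 1 ^ (k + 1) * a 1 := pow_succ _ _
      _ ≤ a 0 ^ k * a (k + 1) * a 1 := mul_le_mul_of_nonneg_right (ih (by omega)) (ha 1)
      _ = a 0 ^ k * (a (k + 1) * a 1) := by ring
      _ ≤ a 0 ^ k * (a 0 * a (k + 2)) :=
          mul_le_mul_of_nonneg_left (ratio (k + 1) hk) (pow_nonneg (ha 0) k)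
      _ = a 0 ^ (k + 1) * a (k + 1 + 1) := by ring

theorem abs_le_sqrt_two_mul_rpow_mul_rpow {u A B : ℝ} {l : ℕ} (hl : l ≠ 0) (hA : 0 ≤ A)
    (hB : 0 ≤ B) (h : u ^ (2 * l) ≤ 2 ^ l * √B * √A ^ (2 * l - 1)) :
    |u| ≤ √2 * B ^ (1 / (4 * (l : ℝ))) * A ^ ((1 - 1 / (2 * (l : ℝ))) / 2) := by
  have hlR : (l : ℝ) ≠ 0 := Nat.cast_ne_zero.2 hl
  have hB_pow : (B ^ (1 / (4 * (l : ℝ)))) ^ (2 * l) = √B := by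
    rw [← Real.rpow_mul_natCast hB, Real.sqrt_eq_rpow]
    congr 1
    push_cast
    field_simp
    norm_num
  have hA_pow : (A ^ ((1 - 1 / (2 * (l : ℝ))) / 2)) ^ (2 * l) = √A ^ (2 * l - 1) := by
    rw [← Real.rpow_mul_natCast hA, Real.sqrt_eq_rpow, ← Real.rpow_mul_natCast hA]
    congr 1
    push_cast [Nat.cast_sub (by omega : 1 ≤ 2 * l)]
    field_simp
  rw [← pow_le_pow_iff_left₀ (abs_nonneg u) (by positivity) (by omega : 2 * l ≠ 0),
    (even_two_mul l).pow_abs, mul_pow, mul_pow, hB_pow, hA_pow, pow_mul (√2),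
    Real.sq_sqrt zero_le_two]
  exact h

theorem stmt_3_general (L : ℝ) (l : ℕ) (hl : 1 ≤ l) (D : ℕ → ℝ → ℝ)
    (hderiv : ∀ i < l, ∀ x ∈ Set.Icc (0:ℝ) L, HasDerivAt (D i) (D (i+1) x) x)
    (hint : ∀ i ≤ l, IntervalIntegrable (fun x => (D i x)^2) MeasureTheory.volume 0 L)
    (hbc : ∀ i < l, D i 0 = 0 ∧ D i L = 0) :
    ∀ x ∈ Set.Icc (0:ℝ) L,
      |D 0 x| ≤ Real.sqrt 2 *
        (∫ x in (0:ℝ)..L, (D l x)^2) ^ (1/(4*(l:ℝ)))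
        * (∫ x in (0:ℝ)..L, (D 0 x)^2) ^ ((1 - 1/(2*(l:ℝ)))/2) := by
  intro x hx
  have hL : 0 ≤ L := hx.1.trans hx.2
  have hmem : ∀ i ≤ l, MemLp (D i) 2 (volume.restrict (Ioc 0 L)) := by
    intro i hi
    refine (memLp_two_iff_integrable_sq ?_).2
      ((intervalIntegrable_iff_integrableOn_Ioc_of_le hL).1 (hint i hi))
    cases i with
    | zero =>
      refine ContinuousOn.aestronglyMeasurable (fun y hy => ?_) measurableSet_Ioc
      exact (hderiv 0 hl y (Ioc_subset_Icc_self hy)).continuousAt.continuousWithinAt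
    | succ i =>
      exact aestronglyMeasurable_of_hasDerivAt fun y hy =>
        hderiv i (by omega) y (Ioo_subset_Icc_self hy)
  set a : ℕ → ℝ := fun i => intervalL2Norm 0 L (D i)
  have ha : ∀ i, 0 ≤ a i := fun i => intervalL2Norm_nonneg _ _ _
  have hsup : D 0 x ^ 2 ≤ 2 * (a 0 * a 1) :=
    sq_le_two_mul_intervalL2Norm_mul_deriv hx (hderiv 0 hl) (hbc 0 hl).1 (hmem 0 l.zero_le)
      (hmem 1 hl)
  obtain ⟨n, rfl⟩ : ∃ n, l = n + 1 := ⟨l - 1, by omega⟩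
  have hlog_convex : a 1 ^ (n + 1) ≤ a 0 ^ n * a (n + 1) :=
    pow_succ_le_pow_mul_of_sq_le_mul ha fun i hi =>
      intervalL2Norm_deriv_sq_le_mul hL (hderiv i (by omega)) (hderiv (i + 1) (by omega))
        (hbc i (by omega)).1 (hbc i (by omega)).2 (hmem i (by omega)) (hmem (i + 2) (by omega))
  have hsq_nonneg : ∀ i, 0 ≤ ∫ y in (0:ℝ)..L, D i y ^ 2 := fun i =>
    integral_nonneg hL fun y _ => sq_nonneg _
  refine abs_le_sqrt_two_mul_rpow_mul_rpow n.succ_ne_zero (hsq_nonneg 0) (hsq_nonneg _) ?_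
  calc D 0 x ^ (2 * (n + 1)) = (D 0 x ^ 2) ^ (n + 1) := pow_mul _ _ _
    _ ≤ (2 * (a 0 * a 1)) ^ (n + 1) := pow_le_pow_left₀ (sq_nonneg _) hsup _
    _ = 2 ^ (n + 1) * a 0 ^ (n + 1) * a 1 ^ (n + 1) := by ring
    _ ≤ 2 ^ (n + 1) * a 0 ^ (n + 1) * (a 0 ^ n * a (n + 1)) := by
        gcongr
        exact mul_nonneg (by positivity) (pow_nonneg (ha 0) _)
    _ = 2 ^ (n + 1) * a (n + 1) * a 0 ^ (2 * (n + 1) - 1) := by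
        rw [show 2 * (n + 1) - 1 = n + 1 + n by omega]; ring

/-- For `l ≥ 1` and `u ∈ H^l₀(0,L)`:
`‖u‖_∞ ≤ √2 ‖D^l u‖^{1/(2l)} ‖u‖^{1-1/(2l)}`.
Here `D i` denotes the `i`-th derivative of `u = D 0`. -/
theorem stmt_3 (L : ℝ) (hL : 0 < L) (l : ℕ) (hl : 1 ≤ l) (D : ℕ → ℝ → ℝ)
    (hderiv : ∀ i < l, ∀ x ∈ Set.Icc (0:ℝ) L, HasDerivAt (D i) (D (i+1) x) x)
    (hint : ∀ i ≤ l, IntervalIntegrable (fun x => (D i x)^2) MeasureTheory.volume 0 L)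
    (hbc : ∀ i < l, D i 0 = 0 ∧ D i L = 0) :
    ∀ x ∈ Set.Icc (0:ℝ) L,
      |D 0 x| ≤ Real.sqrt 2 *
        (∫ x in (0:ℝ)..L, (D l x)^2) ^ (1/(4*(l:ℝ)))
        * (∫ x in (0:ℝ)..L, (D 0 x)^2) ^ ((1 - 1/(2*(l:ℝ)))/2) :=
  stmt_3_general L l hl D hderiv hint hbc
end

section
/- Let u ∈ H^{2l+1}(0,L) with D^i u(0) = D^i u(L) = 0 for i = 0,…,l−1 and D^l u(L) = 0. Then the quadratic form of the dispersive operator satisfies (Au, u)_{L^2} = ½ (D^l u(0))², where Au = Σ_{j=1}^{l} (−1)^{j+1} D^{2j+1} u. In particular (Au, u) ≥ 0. -/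
/-!
Writing `u⁽ⁱ⁾ = D i`, integrate by parts `j` times to move derivatives from `u⁽²ʲ⁺¹⁾` onto `u`:
the boundary terms vanish because `u⁽ⁱ⁾` vanishes at both ends for `i < j`, leaving
`(-1)ʲ ∫ u⁽ʲ⁺¹⁾ u⁽ʲ⁾ = (-1)ʲ (u⁽ʲ⁾(L)² - u⁽ʲ⁾(0)²) / 2`. With the sign `(-1)ʲ⁺¹` of `A`, the
`j`-th term of `(Au, u)` is `(u⁽ʲ⁾(0)² - u⁽ʲ⁾(L)²) / 2`, which is zero for `j < l` and
`u⁽ˡ⁾(0)² / 2` for `j = l`.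
-/

open MeasureTheory Set Finset

theorem intervalIntegral.integral_sum_const_mul_mul {ι : Type*} (s : Finset ι) (c : ι → ℝ)
    (f : ι → ℝ → ℝ) (g : ℝ → ℝ) {a b : ℝ}
    (hfg : ∀ j ∈ s, IntervalIntegrable (fun x => f j x * g x) volume a b) :
    (∫ x in a..b, (∑ j ∈ s, c j * f j x) * g x) = ∑ j ∈ s, c j * ∫ x in a..b, f j x * g x := by
  simp only [Finset.sum_mul, mul_assoc]
  rw [intervalIntegral.integral_finsetSum fun j hj => (hfg j hj).const_mul (c j)]
  simp only [intervalIntegral.integral_const_mul]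

namespace IteratedDerivs

variable {a b : ℝ} {D : ℕ → ℝ → ℝ} {n : ℕ}

theorem intervalIntegrable_mul (hab : a ≤ b) (hcont : ∀ i ≤ n, ContinuousOn (D i) (Icc a b))
    {i k : ℕ} (hi : i ≤ n) (hk : k ≤ n) :
    IntervalIntegrable (fun x => D i x * D k x) volume a b :=
  ((hcont i hi).mul (hcont k hk)).intervalIntegrable_of_Icc hab

theorem integral_succ_mul (hab : a ≤ b)
    (hderiv : ∀ i < n, ∀ x ∈ Icc a b, HasDerivAt (D i) (D (i + 1) x) x)
    (hcont : ∀ i ≤ n, ContinuousOn (D i) (Icc a b)) {m k : ℕ} (hm : m < n) (hk : k < n) :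
    (∫ x in a..b, D (m + 1) x * D k x)
      = D m b * D k b - D m a * D k a - ∫ x in a..b, D m x * D (k + 1) x := by
  rw [← uIcc_of_le hab] at hderiv
  have h := intervalIntegral.integral_mul_deriv_eq_deriv_mul
    (fun x hx => hderiv m hm x hx) (fun x hx => hderiv k hk x hx)
    ((hcont (m + 1) hm).intervalIntegrable_of_Icc hab)
    ((hcont (k + 1) hk).intervalIntegrable_of_Icc hab)
  simp only [mul_comm (D (m + 1) _), mul_comm (D m _) (D (k + 1) _)] at h ⊢
  linarith

theorem integral_succ_mul_self (hab : a ≤ b)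
    (hderiv : ∀ i < n, ∀ x ∈ Icc a b, HasDerivAt (D i) (D (i + 1) x) x)
    (hcont : ∀ i ≤ n, ContinuousOn (D i) (Icc a b)) {j : ℕ} (hj : j < n) :
    (∫ x in a..b, D (j + 1) x * D j x) = (D j b ^ 2 - D j a ^ 2) / 2 := by
  rw [← uIcc_of_le hab] at hderiv
  rw [intervalIntegral.integral_eq_sub_of_hasDerivAt (f := fun x => D j x ^ 2 / 2)
    (fun x hx => (((hderiv j hj x hx).fun_pow 2).div_const 2).congr_deriv (by push_cast; ring))
    (intervalIntegrable_mul hab hcont hj hj.le)]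
  ring

theorem integral_add_mul_zero (hab : a ≤ b)
    (hderiv : ∀ i < n, ∀ x ∈ Icc a b, HasDerivAt (D i) (D (i + 1) x) x)
    (hcont : ∀ i ≤ n, ContinuousOn (D i) (Icc a b)) {m k : ℕ} (hmk : m + k ≤ n)
    (hbc : ∀ i < k, D i a = 0 ∧ D i b = 0) :
    (∫ x in a..b, D (m + k) x * D 0 x) = (-1) ^ k * ∫ x in a..b, D m x * D k x := by
  induction k generalizing m with
  | zero => simp
  | succ k ih =>
    obtain ⟨hka, hkb⟩ := hbc k k.lt_succ_self
    rw [← add_assoc, add_right_comm, ih (by omega) fun i hi => hbc i (by omega),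
      integral_succ_mul hab hderiv hcont (by omega) (by omega), hka, hkb]
    ring

theorem neg_one_pow_succ_mul_integral_odd_mul_zero (hab : a ≤ b)
    (hderiv : ∀ i < n, ∀ x ∈ Icc a b, HasDerivAt (D i) (D (i + 1) x) x)
    (hcont : ∀ i ≤ n, ContinuousOn (D i) (Icc a b)) {j : ℕ} (hj : 2 * j < n)
    (hbc : ∀ i < j, D i a = 0 ∧ D i b = 0) :
    (-1) ^ (j + 1) * (∫ x in a..b, D (2 * j + 1) x * D 0 x) = (D j a ^ 2 - D j b ^ 2) / 2 := by
  rw [show 2 * j + 1 = (j + 1) + j by ring,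
    integral_add_mul_zero hab hderiv hcont (m := j + 1) (by omega) hbc,
    integral_succ_mul_self hab hderiv hcont (j := j) (by omega), ← mul_assoc, ← pow_add,
    Odd.neg_one_pow ⟨j, by ring⟩]
  ring

end IteratedDerivs

open IteratedDerivs in
/-- For `u ∈ D(A)` (i.e. `u ∈ H^l₀ ∩ H^{2l+1}` with `D^l u(L) = 0`),
`(Au, u)_{L²} = ½ (D^l u(0))² ≥ 0`, where
`Au = ∑_{j=1}^{l} (−1)^{j+1} D^{2j+1} u`. Here `D i` is the `i`-th
derivative of `u = D 0`. -/
theorem stmt_5 (L : ℝ) (hL : 0 < L) (l : ℕ) (hl : 1 ≤ l) (D : ℕ → ℝ → ℝ)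
    (hderiv : ∀ i < 2*l+1, ∀ x ∈ Set.Icc (0:ℝ) L, HasDerivAt (D i) (D (i+1) x) x)
    (hcont : ∀ i ≤ 2*l+1, ContinuousOn (D i) (Set.Icc (0:ℝ) L))
    (hbc : ∀ i < l, D i 0 = 0 ∧ D i L = 0) (hbcl : D l L = 0) :
    (∫ x in (0:ℝ)..L,
        (∑ j ∈ Finset.Icc 1 l, (-1:ℝ)^(j+1) * D (2*j+1) x) * D 0 x)
      = (D l 0)^2 / 2 ∧
    0 ≤ ∫ x in (0:ℝ)..L,
        (∑ j ∈ Finset.Icc 1 l, (-1:ℝ)^(j+1) * D (2*j+1) x) * D 0 x := by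
  have hform : (∫ x in (0:ℝ)..L,
      (∑ j ∈ Finset.Icc 1 l, (-1:ℝ)^(j+1) * D (2*j+1) x) * D 0 x) = (D l 0)^2 / 2 := by
    rw [intervalIntegral.integral_sum_const_mul_mul _ _ _ _ fun j hj =>
      intervalIntegrable_mul hL.le hcont (by grind) (by omega),
      Finset.sum_eq_single_of_mem l (Finset.mem_Icc.mpr ⟨hl, le_rfl⟩),
      neg_one_pow_succ_mul_integral_odd_mul_zero hL.le hderiv hcont (by omega) hbc, hbcl]
    · ring
    · intro j hj hjne
      have hjl : j < l := by grind
      rw [neg_one_pow_succ_mul_integral_odd_mul_zero hL.le hderiv hcont (by omega)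
        fun i hi => hbc i (by omega), (hbc j hjl).1, (hbc j hjl).2]
      ring
  exact ⟨hform, hform ▸ by positivity⟩
end

section
/- Let l ≥ 1 and suppose u ∈ H^{2l+1}(0,L) and the combination Σ_{j=1}^{l} (−1)^{j+1} D^{2j+1} u belongs to H^l(0,L). Then D^{(2l+1)+l} u ∈ L^2(0,L) and there is a constant C depending only on L and l such that ‖D^{3l+1} u‖_{L^2}² ≤ C ( ‖u‖_{H^{2l+1}}² + ‖Σ_{j=1}^{l} (−1)^{j+1} D^{2j+1} u‖_{H^l}² ). -/
/-!
The highest-order term of `g⁽ᵏ⁾ = ∑_{j=1}^l (-1)^{j+1} D^{2j+1+k} u` is `±D^{2l+1+k} u`, so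
`D^{2l+1+k} u = ±(g⁽ᵏ⁾ - ∑_{j<l} (-1)^{j+1} D^{2j+1+k} u)` expresses each derivative of order
`2l+1+k ≤ 3l+1` through `g⁽ᵏ⁾` and derivatives of strictly lower order. A strong induction on the
order then bounds `‖D^i u‖²_{L²}` for every `i ≤ 3l+1`, the base cases `i ≤ 2l+1` being part of
`‖u‖²_{H^{2l+1}}`. Square integrability is inherited from the pointwise majorant, measurability
coming from `D^{i+1} u` being a derivative.
-/

open MeasureTheory Finset intervalIntegral Interval

theorem aestronglyMeasurable_of_hasDerivAt_s9 {𝕜 F : Type*} [NontriviallyNormedField 𝕜]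
    [NormedAddCommGroup F] [NormedSpace 𝕜 F] [CompleteSpace F] [MeasurableSpace 𝕜]
    [OpensMeasurableSpace 𝕜] [SecondCountableTopologyEither 𝕜 F] {f f' : 𝕜 → F} {s : Set 𝕜}
    (μ : Measure 𝕜) (hs : MeasurableSet s) (h : ∀ x ∈ s, HasDerivAt f (f' x) x) :
    AEStronglyMeasurable f' (μ.restrict s) :=
  (aestronglyMeasurable_deriv f _).congr <|
    (ae_restrict_iff' hs).2 <| ae_of_all _ fun x hx => (h x hx).deriv

theorem sq_le_of_alternating_sum (a : ℕ → ℝ) {l : ℕ} (hl : 1 ≤ l) :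
    a l ^ 2 ≤ 2 * (∑ j ∈ Icc 1 l, (-1 : ℝ) ^ (j + 1) * a j) ^ 2
      + 2 * l * ∑ j ∈ Ico 1 l, a j ^ 2 := by
  set S := ∑ j ∈ Ico 1 l, (-1 : ℝ) ^ (j + 1) * a j
  have hsign : ∀ n : ℕ, ((-1 : ℝ) ^ n) ^ 2 = 1 := fun n => by
    rw [← pow_mul, mul_comm, pow_mul, neg_one_sq, one_pow]
  have hsplit : ∑ j ∈ Icc 1 l, (-1 : ℝ) ^ (j + 1) * a j = (-1 : ℝ) ^ (l + 1) * a l + S := by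
    rw [← Ico_insert_right hl, sum_insert (by simp)]
  set G := ∑ j ∈ Icc 1 l, (-1 : ℝ) ^ (j + 1) * a j
  have hal : a l ^ 2 = (G + -S) ^ 2 := by
    rw [hsplit]; linear_combination (-a l ^ 2) * hsign (l + 1)
  have hS : S ^ 2 ≤ l * ∑ j ∈ Ico 1 l, a j ^ 2 := by
    calc S ^ 2 ≤ #(Ico 1 l) * ∑ j ∈ Ico 1 l, ((-1 : ℝ) ^ (j + 1) * a j) ^ 2 :=
          sq_sum_le_card_mul_sum_sq
      _ = #(Ico 1 l) * ∑ j ∈ Ico 1 l, a j ^ 2 := by simp only [mul_pow, hsign, one_mul]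
      _ ≤ l * ∑ j ∈ Ico 1 l, a j ^ 2 :=
          mul_le_mul_of_nonneg_right (by simp) (sum_nonneg fun _ _ => sq_nonneg _)
  calc a l ^ 2 = (G + -S) ^ 2 := hal
    _ ≤ 2 * (G ^ 2 + (-S) ^ 2) := add_sq_le
    _ ≤ 2 * G ^ 2 + 2 * l * ∑ j ∈ Ico 1 l, a j ^ 2 := by rw [neg_sq]; linarith

theorem integral_sq_le_of_alternating_sum {f : ℕ → ℝ → ℝ} {a b : ℝ} {l : ℕ} (hab : a ≤ b)
    (hl : 1 ≤ l) (hmeas : AEStronglyMeasurable (f l) (volume.restrict (Ι a b)))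
    (hG : IntervalIntegrable (fun x => (∑ j ∈ Icc 1 l, (-1 : ℝ) ^ (j + 1) * f j x) ^ 2) volume a b)
    (hf : ∀ j ∈ Ico 1 l, IntervalIntegrable (fun x => f j x ^ 2) volume a b) :
    IntervalIntegrable (fun x => f l x ^ 2) volume a b ∧
      ∫ x in a..b, f l x ^ 2 ≤ 2 * (∫ x in a..b, (∑ j ∈ Icc 1 l, (-1 : ℝ) ^ (j + 1) * f j x) ^ 2)
        + 2 * l * ∑ j ∈ Ico 1 l, ∫ x in a..b, f j x ^ 2 := by
  have hsum : IntervalIntegrable (fun x => ∑ j ∈ Ico 1 l, f j x ^ 2) volume a b := by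
    simpa only [Finset.sum_fn] using IntervalIntegrable.sum _ hf
  have hmaj := (hG.const_mul 2).add (hsum.const_mul (2 * l))
  have hle : ∀ x, f l x ^ 2 ≤ 2 * (∑ j ∈ Icc 1 l, (-1 : ℝ) ^ (j + 1) * f j x) ^ 2
      + 2 * l * ∑ j ∈ Ico 1 l, f j x ^ 2 :=
    fun x => sq_le_of_alternating_sum (fun j => f j x) hl
  have hint : IntervalIntegrable (fun x => f l x ^ 2) volume a b :=
    hmaj.mono_fun' (hmeas.pow 2) <| ae_of_all _ fun x => by
      simpa only [Real.norm_of_nonneg (sq_nonneg (f l x))] using hle x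
  refine ⟨hint, (integral_mono_on hab hint hmaj fun x _ => hle x).trans_eq ?_⟩
  rw [integral_add (hG.const_mul 2) (hsum.const_mul _), intervalIntegral.integral_const_mul,
    intervalIntegral.integral_const_mul, integral_finsetSum hf]

/-- The squared `H^n(a,b)` norm when `F i` is the `i`-th derivative. -/
noncomputable def sobolevSqNorm (a b : ℝ) (F : ℕ → ℝ → ℝ) (n : ℕ) : ℝ :=
  ∑ i ∈ range (n + 1), ∫ x in a..b, F i x ^ 2

/-- `altDerivSum l D i = D^i g` for `g = ∑_{j=1}^l (-1)^{j+1} D^{2j+1} u`, with `D i = D^i u`. -/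
def altDerivSum (l : ℕ) (D : ℕ → ℝ → ℝ) (i : ℕ) (x : ℝ) : ℝ :=
  ∑ j ∈ Icc 1 l, (-1 : ℝ) ^ (j + 1) * D (2 * j + 1 + i) x

theorem sobolevSqNorm_nonneg {a b : ℝ} (hab : a ≤ b) (F : ℕ → ℝ → ℝ) (n : ℕ) :
    0 ≤ sobolevSqNorm a b F n :=
  sum_nonneg fun _ _ => integral_nonneg hab fun _ _ => sq_nonneg _

theorem integral_sq_le_sobolevSqNorm {a b : ℝ} (hab : a ≤ b) (F : ℕ → ℝ → ℝ) {i n : ℕ}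
    (hi : i ≤ n) : ∫ x in a..b, F i x ^ 2 ≤ sobolevSqNorm a b F n :=
  single_le_sum (f := fun i => ∫ x in a..b, F i x ^ 2)
    (fun _ _ => integral_nonneg hab fun _ _ => sq_nonneg _) (mem_range.2 (by omega))

theorem integral_sq_le_pow_mul_sobolevSqNorm {a b : ℝ} (hab : a ≤ b) {l : ℕ} {D : ℕ → ℝ → ℝ}
    (hD : ∀ i < 3 * l + 1, ∀ x ∈ Set.Icc a b, HasDerivAt (D i) (D (i + 1) x) x)
    (hu : ∀ i ≤ 2 * l + 1, IntervalIntegrable (fun x => D i x ^ 2) volume a b)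
    (hg : ∀ i ≤ l, IntervalIntegrable (fun x => altDerivSum l D i x ^ 2) volume a b) :
    ∀ i ≤ 3 * l + 1, IntervalIntegrable (fun x => D i x ^ 2) volume a b ∧
      ∫ x in a..b, D i x ^ 2 ≤ (2 * l ^ 2 + 2 : ℝ) ^ i *
        (sobolevSqNorm a b D (2 * l + 1) + sobolevSqNorm a b (altDerivSum l D) l) := by
  set A : ℝ := 2 * l ^ 2 + 2
  set X := sobolevSqNorm a b D (2 * l + 1) + sobolevSqNorm a b (altDerivSum l D) l
  have hA : 1 ≤ A := by simp only [A]; nlinarith [sq_nonneg (l : ℝ)]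
  have hX : 0 ≤ X := add_nonneg (sobolevSqNorm_nonneg hab _ _) (sobolevSqNorm_nonneg hab _ _)
  have hXpow : ∀ n, X ≤ A ^ n * X := fun n => le_mul_of_one_le_left hX (one_le_pow₀ hA)
  intro i
  induction i using Nat.strong_induction_on with
  | _ i ih =>
  intro hi
  rcases le_or_gt i (2 * l + 1) with hlow | hhigh
  · refine ⟨hu i hlow, ?_⟩
    calc ∫ x in a..b, D i x ^ 2 ≤ X := (integral_sq_le_sobolevSqNorm hab D hlow).trans
          (le_add_of_nonneg_right (sobolevSqNorm_nonneg hab _ _))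
      _ ≤ A ^ i * X := hXpow i
  obtain ⟨k, rfl⟩ : ∃ k, i = 2 * l + 1 + k := ⟨i - (2 * l + 1), by omega⟩
  have hl : 1 ≤ l := by omega
  have hmeas : AEStronglyMeasurable (D (2 * l + 1 + k)) (volume.restrict (Ι a b)) :=
    aestronglyMeasurable_of_hasDerivAt_s9 volume measurableSet_uIoc fun x hx => by
      have hx' : x ∈ Set.Icc a b := Set.uIcc_of_le hab ▸ Set.uIoc_subset_uIcc hx
      simpa only [show 2 * l + k + 1 = 2 * l + 1 + k by omega] using
        hD (2 * l + k) (by omega) x hx'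
  have hprev : ∀ j ∈ Ico 1 l, IntervalIntegrable (fun x => D (2 * j + 1 + k) x ^ 2) volume a b ∧
      ∫ x in a..b, D (2 * j + 1 + k) x ^ 2 ≤ A ^ (2 * l + k) * X := fun j hj => by
    have hj := mem_Ico.1 hj
    obtain ⟨hint, hbound⟩ := ih (2 * j + 1 + k) (by omega) (by omega)
    exact ⟨hint, hbound.trans (mul_le_mul_of_nonneg_right (pow_le_pow_right₀ hA (by omega)) hX)⟩
  obtain ⟨hint, hbound⟩ := integral_sq_le_of_alternating_sum (f := fun j => D (2 * j + 1 + k))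
    hab hl hmeas (hg k (by omega)) fun j hj => (hprev j hj).1
  have hgX : ∫ x in a..b, altDerivSum l D k x ^ 2 ≤ A ^ (2 * l + k) * X :=
    calc ∫ x in a..b, altDerivSum l D k x ^ 2 ≤ X :=
          (integral_sq_le_sobolevSqNorm hab _ (by omega)).trans
            (le_add_of_nonneg_left (sobolevSqNorm_nonneg hab _ _))
      _ ≤ A ^ (2 * l + k) * X := hXpow _
  have hlower : ∑ j ∈ Ico 1 l, ∫ x in a..b, D (2 * j + 1 + k) x ^ 2 ≤ l * (A ^ (2 * l + k) * X) :=
    calc _ ≤ #(Ico 1 l) • (A ^ (2 * l + k) * X) :=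
          sum_le_card_nsmul _ _ _ fun j hj => (hprev j hj).2
      _ ≤ l * (A ^ (2 * l + k) * X) := by
          rw [nsmul_eq_mul]; gcongr; simp
  refine ⟨hint, hbound.trans ?_⟩
  calc _ ≤ 2 * (A ^ (2 * l + k) * X) + 2 * l * (l * (A ^ (2 * l + k) * X)) :=
        add_le_add (mul_le_mul_of_nonneg_left hgX two_pos.le)
          (mul_le_mul_of_nonneg_left hlower (by positivity))
    _ = A ^ (2 * l + 1 + k) * X := by ring

theorem stmt_9_general (L : ℝ) (hL : 0 < L) (l : ℕ) :
    ∃ C > (0:ℝ), ∀ D : ℕ → ℝ → ℝ,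
      (∀ i < 3*l+1, ∀ x ∈ Set.Icc (0:ℝ) L, HasDerivAt (D i) (D (i+1) x) x) →
      (∀ i ≤ 2*l+1, IntervalIntegrable (fun x => (D i x)^2) MeasureTheory.volume 0 L) →
      (∀ i ≤ l, IntervalIntegrable
        (fun x => (∑ j ∈ Finset.Icc 1 l, (-1:ℝ)^(j+1) * D (2*j+1+i) x)^2)
        MeasureTheory.volume 0 L) →
      IntervalIntegrable (fun x => (D (3*l+1) x)^2) MeasureTheory.volume 0 L ∧
      (∫ x in (0:ℝ)..L, (D (3*l+1) x)^2)
        ≤ C * ((∑ i ∈ Finset.range (2*l+2), ∫ x in (0:ℝ)..L, (D i x)^2)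
            + ∑ i ∈ Finset.range (l+1), ∫ x in (0:ℝ)..L,
                (∑ j ∈ Finset.Icc 1 l, (-1:ℝ)^(j+1) * D (2*j+1+i) x)^2) :=
  ⟨(2 * l ^ 2 + 2 : ℝ) ^ (3 * l + 1), by positivity, fun _ hD hu hg =>
    integral_sq_le_pow_mul_sobolevSqNorm hL.le hD hu hg _ le_rfl⟩

/-- Smoothing estimate: if `u ∈ H^{2l+1}(0,L)` and
`g = ∑_{j=1}^l (−1)^{j+1} D^{2j+1} u ∈ H^l(0,L)`, then `D^{3l+1}u ∈ L²` and
`‖D^{3l+1}u‖² ≤ C (‖u‖²_{H^{2l+1}} + ‖g‖²_{H^l})` with `C = C(L,l)`.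
`D i` is the `i`-th derivative of `u = D 0`. -/
theorem stmt_9 (L : ℝ) (hL : 0 < L) (l : ℕ) (hl : 1 ≤ l) :
    ∃ C > (0:ℝ), ∀ D : ℕ → ℝ → ℝ,
      (∀ i < 3*l+1, ∀ x ∈ Set.Icc (0:ℝ) L, HasDerivAt (D i) (D (i+1) x) x) →
      (∀ i ≤ 2*l+1, IntervalIntegrable (fun x => (D i x)^2) MeasureTheory.volume 0 L) →
      (∀ i ≤ l, IntervalIntegrable
        (fun x => (∑ j ∈ Finset.Icc 1 l, (-1:ℝ)^(j+1) * D (2*j+1+i) x)^2)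
        MeasureTheory.volume 0 L) →
      IntervalIntegrable (fun x => (D (3*l+1) x)^2) MeasureTheory.volume 0 L ∧
      (∫ x in (0:ℝ)..L, (D (3*l+1) x)^2)
        ≤ C * ((∑ i ∈ Finset.range (2*l+2), ∫ x in (0:ℝ)..L, (D i x)^2)
            + ∑ i ∈ Finset.range (l+1), ∫ x in (0:ℝ)..L,
                (∑ j ∈ Finset.Icc 1 l, (-1:ℝ)^(j+1) * D (2*j+1+i) x)^2) :=
  stmt_9_general L hL l
end

section
/- Let u ∈ H^{2l+1}(0,L) satisfy D^i u(0) = D^i u(L) = 0 for i = 0,…,l−1 and D^l u(L) = 0. Then for each j with 1 ≤ j ≤ l, 2∫_0^L (1+x) u · (−1)^{j+1} D^{2j+1} u dx = (2j+1)‖D^j u‖_{L^2}² + δ_{jl}(D^l u(0))², that is, for the top-order term j = l the boundary contribution is (D^l u(0))², and for j < l there is no boundary contribution. -/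
open Set MeasureTheory

lemma ftc_mul (L : ℝ) (hL : 0 ≤ L) (f g f' g' : ℝ → ℝ)
    (hf : ∀ x ∈ Icc (0:ℝ) L, HasDerivAt f (f' x) x)
    (hg : ∀ x ∈ Icc (0:ℝ) L, HasDerivAt g (g' x) x)
    (hf' : ContinuousOn f' (Icc 0 L)) (hg' : ContinuousOn g' (Icc 0 L)) :
    ∫ x in (0:ℝ)..L, (f' x * g x + f x * g' x) = f L * g L - f 0 * g 0 := by
  have hIcc : Set.uIcc (0:ℝ) L = Icc 0 L := uIcc_of_le hL
  have hfc : ContinuousOn f (Icc (0:ℝ) L) :=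
    fun x hx => ((hf x hx).continuousAt).continuousWithinAt
  have hgc : ContinuousOn g (Icc (0:ℝ) L) :=
    fun x hx => ((hg x hx).continuousAt).continuousWithinAt
  have h := intervalIntegral.integral_eq_sub_of_hasDerivAt
    (f := fun x => f x * g x) (f' := fun x => f' x * g x + f x * g' x)
    (a := 0) (b := L) ?_ ?_
  · exact h
  · intro x hx; rw [hIcc] at hx; exact (hf x hx).mul (hg x hx)
  · apply ContinuousOn.intervalIntegrable; rw [hIcc]
    exact (hf'.mul hgc).add (hfc.mul hg')



/-- Integration-by-parts identity: for `u` smooth with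
`D^i u(0) = D^i u(L) = 0` (`0 ≤ i ≤ l−1`) and `D^l u(L) = 0`, for `1 ≤ j ≤ l`:
`2∫₀^L (1+x) u (−1)^{j+1} D^{2j+1}u dx = (2j+1)‖D^j u‖² + δ_{jl} (D^l u(0))²`.
`D i` is the `i`-th derivative of `u = D 0`. -/
theorem stmt_12 (L : ℝ) (hL : 0 < L) (l : ℕ) (hl : 1 ≤ l)
    (D : ℕ → ℝ → ℝ)
    (hderiv : ∀ i < 2*l+1, ∀ x ∈ Set.Icc (0:ℝ) L, HasDerivAt (D i) (D (i+1) x) x)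
    (hcont : ∀ i ≤ 2*l+1, ContinuousOn (D i) (Set.Icc (0:ℝ) L))
    (hbc : ∀ i < l, D i 0 = 0 ∧ D i L = 0) (hbcl : D l L = 0)
    (j : ℕ) (hj1 : 1 ≤ j) (hjl : j ≤ l) :
    2 * ∫ x in (0:ℝ)..L, (1+x) * D 0 x * ((-1:ℝ)^(j+1) * D (2*j+1) x)
      = (2*(j:ℝ)+1) * (∫ x in (0:ℝ)..L, (D j x)^2)
        + (if j = l then (D l 0)^2 else 0) := by
  have hL' : (0:ℝ) ≤ L := hL.le
  have hIcc : Set.uIcc (0:ℝ) L = Icc 0 L := uIcc_of_le hL'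
  have hInt : ∀ f : ℝ → ℝ, ContinuousOn f (Icc (0:ℝ) L) →
      IntervalIntegrable f volume 0 L := by
    intro f hf
    apply ContinuousOn.intervalIntegrable; rwa [hIcc]
  have hw : ContinuousOn (fun x : ℝ => 1 + x) (Icc (0:ℝ) L) :=
    continuousOn_const.add continuousOn_id
  set Q : ℝ := ∫ x in (0:ℝ)..L, (D j x)^2 with hQdef
  -- Step 1: symmetric integrals
  have hB : ∀ m, m ≤ j →
      (∫ x in (0:ℝ)..L, D (j-m) x * D (j+m) x) = (-1:ℝ)^m * Q := by
    intro m
    induction m with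
    | zero => intro _; simp [hQdef, sq]
    | succ m ih =>
      intro hm
      have hm' : m ≤ j := by omega
      have e1 : j - (m+1) + 1 = j - m := by omega
      have key := ftc_mul L hL' (D (j-(m+1))) (D (j+m)) (D (j-m)) (D (j+m+1))
        (fun x hx => e1 ▸ hderiv (j-(m+1)) (by omega) x hx)
        (fun x hx => hderiv (j+m) (by omega) x hx)
        (hcont (j-m) (by omega)) (hcont (j+m+1) (by omega))
      have hz0 := (hbc (j-(m+1)) (by omega)).1
      have hzL := (hbc (j-(m+1)) (by omega)).2
      rw [hz0, hzL] at key
      rw [intervalIntegral.integral_add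
        (hInt (fun x => D (j-m) x * D (j+m) x) ((hcont (j-m) (by omega)).mul (hcont (j+m) (by omega))))
        (hInt (fun x => D (j-(m+1)) x * D (j+m+1) x) ((hcont (j-(m+1)) (by omega)).mul (hcont (j+m+1) (by omega)))), ih hm'] at key
      have : (∫ x in (0:ℝ)..L, D (j-(m+1)) x * D (j+(m+1)) x)
          = -((-1:ℝ)^m * Q) := by
        have e2 : j + (m+1) = j + m + 1 := by omega
        rw [e2]; linarith [key]
      rw [this]; ring
  -- Step 2: B k for all k ≤ 2j
  have hBk : ∀ k, k ≤ 2*j →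
      (∫ x in (0:ℝ)..L, D k x * D (2*j-k) x) = (-1:ℝ)^(j+k) * Q := by
    intro k hk
    rcases le_or_gt k j with h | h
    · have e1 : j - (j-k) = k := by omega
      have e2 : j + (j-k) = 2*j - k := by omega
      have := hB (j-k) (by omega)
      rw [e1, e2] at this
      rw [this]
      have : (-1:ℝ)^(j+k) = (-1)^(j-k) := by
        rw [show j+k = (j-k) + 2*k by omega, pow_add, pow_mul]; simp
      rw [this]
    · have e1 : j - (k-j) = 2*j - k := by omega
      have e2 : j + (k-j) = k := by omega
      have := hB (k-j) (by omega)
      rw [e1, e2] at this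
      have comm : (∫ x in (0:ℝ)..L, D k x * D (2*j-k) x)
          = ∫ x in (0:ℝ)..L, D (2*j-k) x * D k x := by
        congr 1; funext x; ring
      rw [comm, this]
      have : (-1:ℝ)^(j+k) = (-1)^(k-j) := by
        rw [show j+k = (k-j) + 2*j by omega, pow_add, pow_mul]; simp
      rw [this]
  -- Definitions of J and c
  set J : ℕ → ℝ := fun k => ∫ x in (0:ℝ)..L, (1+x) * D k x * D (2*j+1-k) x with hJdef
  set c : ℕ → ℝ := fun k =>
    -(if k = j ∧ j = l then (D l 0)^2 else 0) - (-1:ℝ)^(j+k) * Q with hcdef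
  -- Step 3: J k + J (k+1) = c k
  have hstep : ∀ k, k ≤ 2*j → J k + J (k+1) = c k := by
    intro k hk
    have e1 : 2*j+1-k = (2*j-k)+1 := by omega
    have e2 : 2*j+1-(k+1) = 2*j-k := by omega
    have key := ftc_mul L hL' (fun x => (1+x) * D k x) (D (2*j-k))
      (fun x => D k x + (1+x) * D (k+1) x) (D (2*j-k+1))
      (fun x hx => by
        have h1 : HasDerivAt (fun x : ℝ => 1 + x) 1 x := by
          simpa using (hasDerivAt_id x).const_add 1
        have h2 := h1.mul (hderiv k (by omega) x hx)
        simp only [one_mul] at h2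
        exact h2)
      (fun x hx => hderiv (2*j-k) (by omega) x hx)
      ((hcont k (by omega)).add (hw.mul (hcont (k+1) (by omega))))
      (hcont (2*j-k+1) (by omega))
    have key2 : (∫ x in (0:ℝ)..L,
        ((D k x + (1+x) * D (k+1) x) * D (2*j-k) x + (1+x) * D k x * D (2*j-k+1) x))
        = (1+L) * D k L * D (2*j-k) L - (1+0) * D k 0 * D (2*j-k) 0 := key
    have c1 : ContinuousOn (fun x => D k x * D (2*j-k) x) (Icc (0:ℝ) L) :=
      (hcont k (by omega)).mul (hcont (2*j-k) (by omega))
    have c2 : ContinuousOn (fun x => (1+x) * D (k+1) x * D (2*j-k) x) (Icc (0:ℝ) L) :=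
      (hw.mul (hcont (k+1) (by omega))).mul (hcont (2*j-k) (by omega))
    have c3 : ContinuousOn (fun x => (1+x) * D k x * D (2*j-k+1) x) (Icc (0:ℝ) L) :=
      (hw.mul (hcont k (by omega))).mul (hcont (2*j-k+1) (by omega))
    have JK : J k = ∫ x in (0:ℝ)..L, (1+x) * D k x * D (2*j-k+1) x := by
      simp only [hJdef]; rw [e1]
    have JK1 : J (k+1) = ∫ x in (0:ℝ)..L, (1+x) * D (k+1) x * D (2*j-k) x := by
      simp only [hJdef]; rw [e2]
    have e : (fun x : ℝ => (D k x + (1+x) * D (k+1) x) * D (2*j-k) x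
        + (1+x) * D k x * D (2*j-k+1) x)
        = fun x => D k x * D (2*j-k) x + ((1+x) * D (k+1) x * D (2*j-k) x
          + (1+x) * D k x * D (2*j-k+1) x) := by funext x; ring
    rw [e, intervalIntegral.integral_add (hInt _ c1) ((hInt _ c2).add (hInt _ c3)),
      intervalIntegral.integral_add (hInt _ c2) (hInt _ c3), hBk k hk,
      ← JK, ← JK1] at key2
    -- boundary values
    have hbL : D k L * D (2*j-k) L = 0 := by
      rcases lt_or_ge k l with h | h
      · rw [(hbc k h).2]; ring
      · rcases lt_or_ge (2*j-k) l with h2 | h2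
        · rw [(hbc _ h2).2]; ring
        · have hkl : k = l := by omega
          rw [hkl, hbcl]; ring
    have hb0 : D k 0 * D (2*j-k) 0 = (if k = j ∧ j = l then (D l 0)^2 else 0) := by
      by_cases hc : k = j ∧ j = l
      · obtain ⟨hc1, hc2⟩ := hc
        have h2 : 2*j-k = l := by omega
        rw [if_pos ⟨hc1, hc2⟩, h2, hc1, hc2, sq]
      · rw [if_neg hc]
        have : k < l ∨ 2*j-k < l := by
          by_contra hcon; push_neg at hcon; exact hc (by omega)
        rcases this with h | h
        · rw [(hbc k h).1]; ring
        · rw [(hbc _ h).1]; ring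
    simp only [hcdef]
    linear_combination key2 + (1+L) * hbL - hb0
  -- Step 4: telescoping
  have htel : ∀ m, m ≤ 2*j+1 →
      J 0 = (∑ k ∈ Finset.range m, (-1:ℝ)^k * c k) + (-1:ℝ)^m * J m := by
    intro m
    induction m with
    | zero => intro _; simp
    | succ m ih =>
      intro hm
      have h1 := ih (by omega)
      have h2 := hstep m (by omega)
      rw [Finset.sum_range_succ, pow_succ]
      have h3 : J m = c m - J (m+1) := by linarith
      rw [h1, h3]; ring
  -- Step 5: J (2j+1) = J 0
  have hsym : J (2*j+1) = J 0 := by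
    have e : 2*j+1-(2*j+1) = 0 := by omega
    simp only [hJdef, e, Nat.sub_zero]
    congr 1; funext x; ring
  have h20 := htel (2*j+1) le_rfl
  rw [hsym] at h20
  have hodd : ((-1:ℝ))^(2*j+1) = -1 := Odd.neg_one_pow ⟨j, by ring⟩
  rw [hodd] at h20
  have h2J : 2 * J 0 = ∑ k ∈ Finset.range (2*j+1), (-1:ℝ)^k * c k := by linarith
  have hsq : ((-1:ℝ)^j) * ((-1:ℝ)^j) = 1 := by
    rw [← pow_add]; exact Even.neg_one_pow ⟨j, by ring⟩
  -- sum evaluation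
  have hsum : ∑ k ∈ Finset.range (2*j+1), (-1:ℝ)^k * c k
      = -((-1:ℝ)^j * (if j = l then (D l 0)^2 else 0)) - (2*(j:ℝ)+1) * ((-1:ℝ)^j * Q) := by
    have hterm : ∀ k ∈ Finset.range (2*j+1), (-1:ℝ)^k * c k
        = -(if k = j then (-1:ℝ)^j * (if j = l then (D l 0)^2 else 0) else 0)
          - (-1:ℝ)^j * Q := by
      intro k _
      simp only [hcdef]
      have hp : (-1:ℝ)^k * (-1:ℝ)^(j+k) = (-1:ℝ)^j := by
        rw [← pow_add, show k+(j+k) = j + 2*k by omega, pow_add, pow_mul]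
        simp
      by_cases hkj : k = j
      · have hk' : (-1:ℝ)^k = (-1)^j := by rw [hkj]
        by_cases hjel : j = l
        · rw [if_pos (⟨hkj, hjel⟩ : k = j ∧ j = l), if_pos hkj, if_pos hjel]
          linear_combination (-(D l 0)^2) * hk' + (-Q) * hp
        · rw [if_neg (fun hh : k = j ∧ j = l => hjel hh.2), if_pos hkj, if_neg hjel]
          linear_combination (-Q) * hp
      · rw [if_neg (fun hh : k = j ∧ j = l => hkj hh.1), if_neg hkj]
        linear_combination (-Q) * hp
    rw [Finset.sum_congr rfl hterm, Finset.sum_sub_distrib]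
    rw [Finset.sum_neg_distrib, Finset.sum_ite_eq' (Finset.range (2*j+1)) j
      (fun _ => (-1:ℝ)^j * (if j = l then (D l 0)^2 else 0))]
    rw [if_pos (Finset.mem_range.mpr (by omega)), Finset.sum_const, Finset.card_range,
      nsmul_eq_mul]
    push_cast
    ring
  -- LHS rewriting
  have hlhs : (∫ x in (0:ℝ)..L, (1+x) * D 0 x * ((-1:ℝ)^(j+1) * D (2*j+1) x))
      = (-1:ℝ)^(j+1) * J 0 := by
    simp only [hJdef, Nat.sub_zero]
    rw [← intervalIntegral.integral_const_mul]
    congr 1; funext x; ring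
  rw [hlhs]
  rw [hsum] at h2J
  by_cases hje : j = l
  · rw [if_pos hje] at h2J ⊢
    linear_combination (-(-1:ℝ)^j) * h2J + ((D l 0)^2 + (2*(j:ℝ)+1)*Q) * hsq
  · rw [if_neg hje] at h2J ⊢
    linear_combination (-(-1:ℝ)^j) * h2J + ((2*(j:ℝ)+1)*Q) * hsq
end

section
/- For all real x and natural k ≥ 1, the derivative formula ∂_t (v^k Dv) = k v^{k−1} v_t Dv + v^k D v_t holds for sufficiently regular v, and consequently if v, v_t ∈ L^2(0,T;H^l_0(0,L)) with v ∈ C([0,T];H^l_0(0,L)), then v^k Dv ∈ H^1(0,T; L^2(0,L)) with ‖(v^k Dv)_t‖_{L^2(Q_T)}² ≤ 2^{k+2}(k²+1) ‖v‖_{C([0,T];H^l_0)}^{2k} ‖v_t‖_{L^2(0,T;H^l_0)}². -/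
/-!
A function vanishing at the left endpoint satisfies `f(x)² ≤ ‖f‖²_{L²} + ‖f'‖²_{L²}`
(integrate `(f²)' = 2ff' ≤ f² + f'²`), so `v` and `v_t` are bounded pointwise by their `H^l`
norms. Then
`(k v^{k-1} v_t Dv + v^k Dv_t)² ≤ 2k² v^{2(k-1)} v_t² (Dv)² + 2 v^{2k} (Dv_t)²`,
and integrating in `x` and then in `t` gives the bound, with `2(k² + 1) ≤ 2^{k+2}(k² + 1)`.
-/

open MeasureTheory intervalIntegral Set

theorem sq_le_integral_sq_add_integral_sq_deriv {a b x : ℝ} {f f' : ℝ → ℝ}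
    (hf : ∀ y ∈ Icc a b, HasDerivAt f (f' y) y) (ha : f a = 0)
    (hf2 : IntervalIntegrable (fun y => f y ^ 2) volume a b)
    (hf'2 : IntervalIntegrable (fun y => f' y ^ 2) volume a b) (hx : x ∈ Icc a b) :
    f x ^ 2 ≤ (∫ y in a..b, f y ^ 2) + ∫ y in a..b, f' y ^ 2 := by
  have hsub : Icc a x ⊆ Icc a b := Icc_subset_Icc_right hx.2
  have hsum : IntervalIntegrable (fun y => f y ^ 2 + f' y ^ 2) volume a b := hf2.add hf'2
  have hsum_ax : IntegrableOn (fun y => f y ^ 2 + f' y ^ 2) (Icc a x) :=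
    ((intervalIntegrable_iff_integrableOn_Icc_of_le (hx.1.trans hx.2)).mp hsum).mono_set hsub
  have hftc : f x ^ 2 - f a ^ 2 ≤ ∫ y in a..x, (f y ^ 2 + f' y ^ 2) :=
    sub_le_integral_of_hasDeriv_right_of_le hx.1
      (fun y hy => ((hf y (hsub hy)).continuousAt.pow 2).continuousWithinAt)
      (fun y hy => ((hf y (hsub (Ioo_subset_Icc_self hy))).pow 2).hasDerivWithinAt)
      hsum_ax (fun y _ => by simpa using two_mul_le_add_sq (f y) (f' y))
  calc f x ^ 2 ≤ ∫ y in a..x, (f y ^ 2 + f' y ^ 2) := by simpa [ha] using hftc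
    _ ≤ ∫ y in a..b, (f y ^ 2 + f' y ^ 2) :=
      integral_mono_interval le_rfl hx.1 hx.2 (ae_of_all _ fun y => by positivity) hsum
    _ = _ := integral_add hf2 hf'2

/-- The squared `H^l(a,b)` norm of the function whose `i`-th derivative is `g i`. -/
noncomputable def sobolevNormSq (a b : ℝ) (l : ℕ) (g : ℕ → ℝ → ℝ) : ℝ :=
  ∑ i ∈ Finset.range (l + 1), ∫ x in a..b, g i x ^ 2

section sobolevNormSq

variable {a b : ℝ} {l : ℕ} {g : ℕ → ℝ → ℝ}

theorem integral_sq_nonneg (hab : a ≤ b) (f : ℝ → ℝ) : 0 ≤ ∫ x in a..b, f x ^ 2 :=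
  integral_nonneg hab fun x _ => sq_nonneg (f x)

theorem sobolevNormSq_nonneg (hab : a ≤ b) : 0 ≤ sobolevNormSq a b l g :=
  Finset.sum_nonneg fun i _ => integral_sq_nonneg hab (g i)

theorem integral_sq_le_sobolevNormSq (hab : a ≤ b) {i : ℕ} (hi : i ≤ l) :
    ∫ x in a..b, g i x ^ 2 ≤ sobolevNormSq a b l g :=
  Finset.single_le_sum (f := fun i => ∫ x in a..b, g i x ^ 2)
    (fun i _ => integral_sq_nonneg hab (g i)) (Finset.mem_range.mpr (Nat.lt_succ_of_le hi))

theorem sq_le_sobolevNormSq (hab : a ≤ b) (hl : 1 ≤ l)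
    (hg : ∀ x ∈ Icc a b, HasDerivAt (g 0) (g 1 x) x) (hga : g 0 a = 0)
    (hint : ∀ i ≤ l, IntervalIntegrable (fun x => g i x ^ 2) volume a b)
    {x : ℝ} (hx : x ∈ Icc a b) :
    g 0 x ^ 2 ≤ sobolevNormSq a b l g := by
  refine (sq_le_integral_sq_add_integral_sq_deriv hg hga (hint 0 (Nat.zero_le l)) (hint 1 hl)
    hx).trans ?_
  calc (∫ x in a..b, g 0 x ^ 2) + ∫ x in a..b, g 1 x ^ 2
      = ∑ i ∈ Finset.range 2, ∫ x in a..b, g i x ^ 2 := by simp [Finset.sum_range_succ]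
    _ ≤ sobolevNormSq a b l g :=
      Finset.sum_le_sum_of_subset_of_nonneg (Finset.range_subset_range.mpr (by omega))
        fun i _ _ => integral_sq_nonneg hab (g i)

end sobolevNormSq

theorem product_rule_sq_le {k : ℕ} {M E u w p q : ℝ} (hu : u ^ 2 ≤ M) (hw : w ^ 2 ≤ E) :
    (k * u ^ (k - 1) * w * p + u ^ k * q) ^ 2
      ≤ 2 * k ^ 2 * M ^ (k - 1) * E * p ^ 2 + 2 * M ^ k * q ^ 2 := by
  have hM : 0 ≤ M := (sq_nonneg u).trans hu
  have hfirst : (k * u ^ (k - 1) * w * p) ^ 2 ≤ k ^ 2 * M ^ (k - 1) * E * p ^ 2 := by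
    calc (k * u ^ (k - 1) * w * p) ^ 2 = k ^ 2 * (u ^ 2) ^ (k - 1) * w ^ 2 * p ^ 2 := by ring
      _ ≤ k ^ 2 * M ^ (k - 1) * E * p ^ 2 := by gcongr
  have hsecond : (u ^ k * q) ^ 2 ≤ M ^ k * q ^ 2 := by
    calc (u ^ k * q) ^ 2 = (u ^ 2) ^ k * q ^ 2 := by ring
      _ ≤ M ^ k * q ^ 2 := by gcongr
  linarith [add_sq_le (a := k * u ^ (k - 1) * w * p) (b := u ^ k * q)]

theorem integral_product_rule_sq_le {a b : ℝ} (hab : a ≤ b) {k : ℕ} (hk : 1 ≤ k) {M E : ℝ}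
    {u w p q : ℝ → ℝ} (hu : ∀ x ∈ Icc a b, u x ^ 2 ≤ M) (hw : ∀ x ∈ Icc a b, w x ^ 2 ≤ E)
    (hp2 : IntervalIntegrable (fun x => p x ^ 2) volume a b)
    (hq2 : IntervalIntegrable (fun x => q x ^ 2) volume a b)
    (hp : ∫ x in a..b, p x ^ 2 ≤ M) (hq : ∫ x in a..b, q x ^ 2 ≤ E)
    (hint : IntervalIntegrable
      (fun x => (k * u x ^ (k - 1) * w x * p x + u x ^ k * q x) ^ 2) volume a b) :
    ∫ x in a..b, (k * u x ^ (k - 1) * w x * p x + u x ^ k * q x) ^ 2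
      ≤ 2 * (k ^ 2 + 1) * M ^ k * E := by
  have hM : 0 ≤ M := (integral_sq_nonneg hab p).trans hp
  have hE : 0 ≤ E := (integral_sq_nonneg hab q).trans hq
  obtain ⟨j, rfl⟩ : ∃ j, k = j + 1 := ⟨k - 1, by omega⟩
  calc ∫ x in a..b, ((j + 1 : ℕ) * u x ^ (j + 1 - 1) * w x * p x + u x ^ (j + 1) * q x) ^ 2
      ≤ ∫ x in a..b, (2 * ((j + 1 : ℕ) : ℝ) ^ 2 * M ^ (j + 1 - 1) * E * p x ^ 2
          + 2 * M ^ (j + 1) * q x ^ 2) :=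
        integral_mono_on hab hint ((hp2.const_mul _).add (hq2.const_mul _))
          fun x hx => product_rule_sq_le (hu x hx) (hw x hx)
    _ = 2 * ((j + 1 : ℕ) : ℝ) ^ 2 * M ^ j * E * (∫ x in a..b, p x ^ 2)
          + 2 * M ^ (j + 1) * ∫ x in a..b, q x ^ 2 := by
        rw [Nat.add_sub_cancel, integral_add (hp2.const_mul _) (hq2.const_mul _),
          intervalIntegral.integral_const_mul, intervalIntegral.integral_const_mul]
    _ ≤ 2 * ((j + 1 : ℕ) : ℝ) ^ 2 * M ^ j * E * M + 2 * M ^ (j + 1) * E := by gcongr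
    _ = 2 * (((j + 1 : ℕ) : ℝ) ^ 2 + 1) * M ^ (j + 1) * E := by ring

theorem stmt_19_general (L T : ℝ) (hL : 0 < L) (hT : 0 < T) (l k : ℕ) (hl : 1 ≤ l) (hk : 1 ≤ k)
    (Dv Dvt : ℕ → ℝ → ℝ → ℝ)
    (hderivx : ∀ t ∈ Set.Icc (0:ℝ) T, ∀ i < l, ∀ x ∈ Set.Icc (0:ℝ) L,
      HasDerivAt (fun y => Dv i t y) (Dv (i+1) t x) x)
    (hderivxt : ∀ t ∈ Set.Icc (0:ℝ) T, ∀ i < l, ∀ x ∈ Set.Icc (0:ℝ) L,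
      HasDerivAt (fun y => Dvt i t y) (Dvt (i+1) t x) x)
    (hderivt0 : ∀ t ∈ Set.Icc (0:ℝ) T, ∀ x ∈ Set.Icc (0:ℝ) L,
      HasDerivAt (fun τ => Dv 0 τ x) (Dvt 0 t x) t)
    (hderivt1 : ∀ t ∈ Set.Icc (0:ℝ) T, ∀ x ∈ Set.Icc (0:ℝ) L,
      HasDerivAt (fun τ => Dv 1 τ x) (Dvt 1 t x) t)
    (hbc : ∀ t ∈ Set.Icc (0:ℝ) T, ∀ i < l, Dv i t 0 = 0 ∧ Dv i t L = 0)
    (hbct : ∀ t ∈ Set.Icc (0:ℝ) T, ∀ i < l, Dvt i t 0 = 0 ∧ Dvt i t L = 0)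
    (hintx : ∀ t ∈ Set.Icc (0:ℝ) T, ∀ i ≤ l,
      IntervalIntegrable (fun x => (Dv i t x)^2) MeasureTheory.volume 0 L)
    (hintxt : ∀ t ∈ Set.Icc (0:ℝ) T, ∀ i ≤ l,
      IntervalIntegrable (fun x => (Dvt i t x)^2) MeasureTheory.volume 0 L)
    (hintprod : ∀ t ∈ Set.Icc (0:ℝ) T, IntervalIntegrable
      (fun x => ((k:ℝ) * (Dv 0 t x)^(k-1) * Dvt 0 t x * Dv 1 t x
        + (Dv 0 t x)^k * Dvt 1 t x)^2) MeasureTheory.volume 0 L)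
    (hintt1 : IntervalIntegrable
      (fun t => ∫ x in (0:ℝ)..L, ((k:ℝ) * (Dv 0 t x)^(k-1) * Dvt 0 t x * Dv 1 t x
        + (Dv 0 t x)^k * Dvt 1 t x)^2) MeasureTheory.volume 0 T)
    (hintt2 : IntervalIntegrable
      (fun t => ∑ i ∈ Finset.range (l+1), ∫ x in (0:ℝ)..L, (Dvt i t x)^2)
      MeasureTheory.volume 0 T)
    (S : ℝ)
    (hS : ∀ t ∈ Set.Icc (0:ℝ) T,
      (∑ i ∈ Finset.range (l+1), ∫ x in (0:ℝ)..L, (Dv i t x)^2) ≤ S^2) :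
    (∀ t ∈ Set.Icc (0:ℝ) T, ∀ x ∈ Set.Icc (0:ℝ) L,
      HasDerivAt (fun τ => (Dv 0 τ x)^k * Dv 1 τ x)
        ((k:ℝ) * (Dv 0 t x)^(k-1) * Dvt 0 t x * Dv 1 t x
          + (Dv 0 t x)^k * Dvt 1 t x) t) ∧
    (∫ t in (0:ℝ)..T, ∫ x in (0:ℝ)..L,
        ((k:ℝ) * (Dv 0 t x)^(k-1) * Dvt 0 t x * Dv 1 t x
          + (Dv 0 t x)^k * Dvt 1 t x)^2)
      ≤ 2^(k+2) * ((k:ℝ)^2+1) * S^(2*k) *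
        ∫ t in (0:ℝ)..T, ∑ i ∈ Finset.range (l+1), ∫ x in (0:ℝ)..L, (Dvt i t x)^2 := by
  refine ⟨fun t ht x hx => ((hderivt0 t ht x hx).pow k).mul (hderivt1 t ht x hx), ?_⟩
  have hslice : ∀ t ∈ Icc (0:ℝ) T,
      (∫ x in (0:ℝ)..L, ((k:ℝ) * (Dv 0 t x)^(k-1) * Dvt 0 t x * Dv 1 t x
        + (Dv 0 t x)^k * Dvt 1 t x)^2)
        ≤ 2^(k+2) * ((k:ℝ)^2+1) * S^(2*k) * sobolevNormSq 0 L l (fun i => Dvt i t) := by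
    intro t ht
    have hv : ∀ x ∈ Icc (0:ℝ) L, Dv 0 t x ^ 2 ≤ S ^ 2 := fun x hx =>
      (sq_le_sobolevNormSq hL.le hl (hderivx t ht 0 hl) (hbc t ht 0 hl).1 (hintx t ht) hx).trans
        (hS t ht)
    have hvt : ∀ x ∈ Icc (0:ℝ) L, Dvt 0 t x ^ 2 ≤ sobolevNormSq 0 L l (fun i => Dvt i t) :=
      fun x hx => sq_le_sobolevNormSq hL.le hl (hderivxt t ht 0 hl) (hbct t ht 0 hl).1
        (hintxt t ht) hx
    calc _ ≤ 2 * ((k:ℝ)^2+1) * (S^2)^k * sobolevNormSq 0 L l (fun i => Dvt i t) :=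
          integral_product_rule_sq_le hL.le hk hv hvt (hintx t ht 1 hl) (hintxt t ht 1 hl)
            ((integral_sq_le_sobolevNormSq (g := fun i => Dv i t) hL.le hl).trans (hS t ht))
            (integral_sq_le_sobolevNormSq (g := fun i => Dvt i t) hL.le hl) (hintprod t ht)
      _ ≤ _ := by
          rw [pow_mul]
          have := sobolevNormSq_nonneg (l := l) (g := fun i => Dvt i t) hL.le
          have h2 : (2:ℝ) ≤ 2 ^ (k + 2) := le_self_pow₀ one_le_two (by omega)
          gcongr
  calc _ ≤ ∫ t in (0:ℝ)..T,
        2^(k+2) * ((k:ℝ)^2+1) * S^(2*k) * sobolevNormSq 0 L l (fun i => Dvt i t) :=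
        integral_mono_on hT.le hintt1 (hintt2.const_mul _) hslice
    _ = _ := intervalIntegral.integral_const_mul _ _

/-- Product rule `(v^k Dv)_t = k v^{k−1} v_t Dv + v^k D v_t` and the bound
`‖(v^k Dv)_t‖²_{L²(Q_T)} ≤ 2^{k+2}(k²+1) ‖v‖_{C([0,T];H^l₀)}^{2k} ‖v_t‖²_{L²(0,T;H^l₀)}`.
`Dv i t` (resp. `Dvt i t`) is the `i`-th spatial derivative of `v t = Dv 0 t`
(resp. of `v_t t = Dvt 0 t`); `S` bounds `sup_t ‖v(t)‖_{H^l}`. -/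
theorem stmt_19 (L T : ℝ) (hL : 0 < L) (hT : 0 < T) (l k : ℕ) (hl : 1 ≤ l) (hk : 1 ≤ k)
    (Dv Dvt : ℕ → ℝ → ℝ → ℝ)
    (hderivx : ∀ t ∈ Set.Icc (0:ℝ) T, ∀ i < l, ∀ x ∈ Set.Icc (0:ℝ) L,
      HasDerivAt (fun y => Dv i t y) (Dv (i+1) t x) x)
    (hderivxt : ∀ t ∈ Set.Icc (0:ℝ) T, ∀ i < l, ∀ x ∈ Set.Icc (0:ℝ) L,
      HasDerivAt (fun y => Dvt i t y) (Dvt (i+1) t x) x)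
    (hderivt0 : ∀ t ∈ Set.Icc (0:ℝ) T, ∀ x ∈ Set.Icc (0:ℝ) L,
      HasDerivAt (fun τ => Dv 0 τ x) (Dvt 0 t x) t)
    (hderivt1 : ∀ t ∈ Set.Icc (0:ℝ) T, ∀ x ∈ Set.Icc (0:ℝ) L,
      HasDerivAt (fun τ => Dv 1 τ x) (Dvt 1 t x) t)
    (hbc : ∀ t ∈ Set.Icc (0:ℝ) T, ∀ i < l, Dv i t 0 = 0 ∧ Dv i t L = 0)
    (hbct : ∀ t ∈ Set.Icc (0:ℝ) T, ∀ i < l, Dvt i t 0 = 0 ∧ Dvt i t L = 0)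
    (hintx : ∀ t ∈ Set.Icc (0:ℝ) T, ∀ i ≤ l,
      IntervalIntegrable (fun x => (Dv i t x)^2) MeasureTheory.volume 0 L)
    (hintxt : ∀ t ∈ Set.Icc (0:ℝ) T, ∀ i ≤ l,
      IntervalIntegrable (fun x => (Dvt i t x)^2) MeasureTheory.volume 0 L)
    (hintprod : ∀ t ∈ Set.Icc (0:ℝ) T, IntervalIntegrable
      (fun x => ((k:ℝ) * (Dv 0 t x)^(k-1) * Dvt 0 t x * Dv 1 t x
        + (Dv 0 t x)^k * Dvt 1 t x)^2) MeasureTheory.volume 0 L)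
    (hintt1 : IntervalIntegrable
      (fun t => ∫ x in (0:ℝ)..L, ((k:ℝ) * (Dv 0 t x)^(k-1) * Dvt 0 t x * Dv 1 t x
        + (Dv 0 t x)^k * Dvt 1 t x)^2) MeasureTheory.volume 0 T)
    (hintt2 : IntervalIntegrable
      (fun t => ∑ i ∈ Finset.range (l+1), ∫ x in (0:ℝ)..L, (Dvt i t x)^2)
      MeasureTheory.volume 0 T)
    (S : ℝ) (hS0 : 0 ≤ S)
    (hS : ∀ t ∈ Set.Icc (0:ℝ) T,
      (∑ i ∈ Finset.range (l+1), ∫ x in (0:ℝ)..L, (Dv i t x)^2) ≤ S^2) :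
    (∀ t ∈ Set.Icc (0:ℝ) T, ∀ x ∈ Set.Icc (0:ℝ) L,
      HasDerivAt (fun τ => (Dv 0 τ x)^k * Dv 1 τ x)
        ((k:ℝ) * (Dv 0 t x)^(k-1) * Dvt 0 t x * Dv 1 t x
          + (Dv 0 t x)^k * Dvt 1 t x) t) ∧
    (∫ t in (0:ℝ)..T, ∫ x in (0:ℝ)..L,
        ((k:ℝ) * (Dv 0 t x)^(k-1) * Dvt 0 t x * Dv 1 t x
          + (Dv 0 t x)^k * Dvt 1 t x)^2)
      ≤ 2^(k+2) * ((k:ℝ)^2+1) * S^(2*k) *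
        ∫ t in (0:ℝ)..T, ∑ i ∈ Finset.range (l+1), ∫ x in (0:ℝ)..L, (Dvt i t x)^2 :=
  stmt_19_general L T hL hT l k hl hk Dv Dvt hderivx hderivxt hderivt0 hderivt1 hbc hbct hintx
    hintxt hintprod hintt1 hintt2 S hS
end
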